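/- Deleting a redundant repeat preserves sortability: let π and τ be chromosomes with A[π] = A[τ] and let |x_i|, |x_{i+1}| be two redundant repeats in π (the adjacency between them appears twice, with the two occurrences of |x_{i+1}| always immediately following/preceding the corresponding occurrences of |x_i| in the same relative orientation). Let π' and τ' be obtained by deleting both occurrences of |x_{i+1}| from π and τ respectively. Then π can be transformed into τ by symmetric reversals if and only if π' can be transformed into τ' by symmetric reversals. -/

import Mathlib

open List

variable {α : Type*}

/-- A signed symbol: (name, orientation); `true` means positive. -/
abbrev SSym (α : Type*) := α × Bool

/-- Negation (orientation flip) of a signed symbol. -/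
def symNeg (x : SSym α) : SSym α := (x.1, !x.2)

/-- Left node of an occurrence: a node `(a, true)` denotes the head `aʰ`,
and `(a, false)` denotes the tail `aᵗ`; a positive occurrence contributes
`(aʰ, aᵗ)`, a negative one `(aᵗ, aʰ)`. -/
def lnode (x : SSym α) : SSym α := x

/-- Right node of an occurrence. -/
def rnode (x : SSym α) : SSym α := (x.1, !x.2)

/-- The unordered adjacency between two consecutive occurrences. -/
def adjOf (u v : SSym α) : Multiset (SSym α) := {rnode u, lnode v}

/-- The multiset of adjacencies of a chromosome. -/
def adjMS : List (SSym α) → Multiset (Multiset (SSym α))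
  | u :: v :: rest => adjOf u v ::ₘ adjMS (v :: rest)
  | _ => 0

/-- Reversed and negated form of a segment. -/
def revneg (s : List (SSym α)) : List (SSym α) := (s.map symNeg).reverse

/-- One symmetric reversal: the reversed segment is flanked by a pair of
inverted occurrences of the same repeat. -/
def SymRev (π π' : List (SSym α)) : Prop :=
  ∃ (p m q : List (SSym α)) (x : SSym α),
    π = p ++ x :: m ++ symNeg x :: q ∧
    π' = p ++ x :: revneg m ++ symNeg x :: q

/-- A symmetric reversal performed on the repeat `a`. -/
def SymRevOn (a : α) (π π' : List (SSym α)) : Prop :=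
  ∃ (p m q : List (SSym α)) (x : SSym α), x.1 = a ∧
    π = p ++ x :: m ++ symNeg x :: q ∧
    π' = p ++ x :: revneg m ++ symNeg x :: q

/-- `π` can be transformed into `τ` by a series of symmetric reversals. -/
def Transformable (π τ : List (SSym α)) : Prop := Relation.ReflTransGen SymRev π τ

/-- `π` can be transformed into `τ` by exactly `m` symmetric reversals. -/
def ChainRev : ℕ → List (SSym α) → List (SSym α) → Prop
  | 0, π, τ => π = τ
  | n + 1, π, τ => ∃ π', SymRev π π' ∧ ChainRev n π' τ

/-- A chromosome is flanked by `+r₀` and `-r₀`. -/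
def IsChromosome (r₀ : α) (π : List (SSym α)) : Prop :=
  ∃ m : List (SSym α), π = (r₀, true) :: m ++ [(r₀, false)]

/-- Duplication number of symbol `a` in `π` (occurrences in both orientations). -/
def dpCount [DecidableEq α] (a : α) (π : List (SSym α)) : ℕ := (π.map Prod.fst).count a

/-- Related chromosomes: identical duplication numbers for every gene/repeat. -/
def Related [DecidableEq α] (π τ : List (SSym α)) : Prop := ∀ a, dpCount a π = dpCount a τ

/-- A chromosome is simple if every adjacency appears only once. -/
def Simple [DecidableEq α] (π : List (SSym α)) : Prop := ∀ A, (adjMS π).count A ≤ 1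

/-- Deletion of all occurrences of the repeat `b`. -/
def delSym [DecidableEq α] (b : α) (π : List (SSym α)) : List (SSym α) :=
  π.filter fun x => decide (x.1 ≠ b)

/-- The repeat `a` is neighbor-consistent: the two adjacencies flanking any of its
occurrences in `π` are matched to the two adjacencies flanking a single
occurrence of `a` in `τ`. -/
def NeighborConsistent (π τ : List (SSym α)) (a : α) : Prop :=
  ∀ (p q : List (SSym α)) (u x v : SSym α),
    π = p ++ u :: x :: v :: q → x.1 = a →
    ∃ (p' q' : List (SSym α)) (u' y v' : SSym α),
      τ = p' ++ u' :: y :: v' :: q' ∧ y.1 = a ∧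
      ({adjOf u x, adjOf x v} : Multiset (Multiset (SSym α))) =
        {adjOf u' y, adjOf y v'}

/-- The repeat `a` is black in `IG(π, τ)`: its two occurrences in `π`
have opposite signs. -/
def Black (π : List (SSym α)) (a : α) : Prop :=
  ∃ (p q r : List (SSym α)) (x y : SSym α),
    π = p ++ x :: q ++ y :: r ∧ x.1 = a ∧ y.1 = a ∧ x.2 ≠ y.2

/-- The occurrence intervals of the repeats `a` and `b` interleave in `π`
(the adjacency relation of the intersection graph `IG(π, τ)`). -/
def Interleaves (π : List (SSym α)) (a b : α) : Prop :=
  a ≠ b ∧ ∃ (p q r s t : List (SSym α)) (x y x' y' : SSym α),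
    x.1 = a ∧ x'.1 = a ∧ y.1 = b ∧ y'.1 = b ∧
    (π = p ++ x :: q ++ y :: r ++ x' :: s ++ y' :: t ∨
     π = p ++ y :: q ++ x :: r ++ y' :: s ++ x' :: t)

/-- Two repeats are in the same connected component of the intersection graph. -/
def InSameComponent (π : List (SSym α)) : α → α → Prop :=
  Relation.ReflTransGen (Interleaves π)

/-- An abstract vertex-colored, vertex-weighted graph (intersection graph). -/
structure ColoredGraph (V : Type*) where
  adj : V → V → Prop
  black : V → Prop
  weight : V → ℕ

/-- The effect of performing a symmetric reversal on a black vertex `x`: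
(rule-I) the colors of all neighbors of `x` are toggled; (rule-II) adjacency
among the neighbors of `x` is complemented; (rule-III) the weight of `x`
is decremented (and `x` is deleted when the weight reaches `0`). -/
def reverseAt {V : Type*} [DecidableEq V] (G : ColoredGraph V) (x : V) :
    ColoredGraph V where
  adj u v := (G.adj x u ∧ G.adj x v ∧ ¬ G.adj u v ∧ u ≠ v) ∨
    (¬ (G.adj x u ∧ G.adj x v) ∧ G.adj u v)
  black v := (G.adj x v ∧ ¬ G.black v) ∨ (¬ G.adj x v ∧ G.black v)
  weight v := if v = x then G.weight v - 1 else G.weight v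

/-- Reachability in a colored graph avoiding deleted (`dead`) vertices. -/
def Reach {V : Type*} (G : ColoredGraph V) (dead : V → Prop) : V → V → Prop :=
  Relation.ReflTransGen (fun u v => G.adj u v ∧ ¬ dead u ∧ ¬ dead v)

/-- The 2-balanced condition: any two occurrences of the same repeat in `τ`
have opposite signs. -/
def BalancedTarget (τ : List (SSym α)) : Prop :=
  ∀ (p q r : List (SSym α)) (x y : SSym α),
    τ = p ++ x :: q ++ y :: r → x.1 = y.1 → x.2 ≠ y.2

/-- The adjacency `⟨u, v⟩` of `π` is positive: it is matched to an adjacency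
`⟨y_j, y_{j+1}⟩` of `τ` with `r(u) = r(y_j)` and `l(v) = l(y_{j+1})`, i.e.
`τ` contains the consecutive pair `u v` literally. -/
def PosIn (τ : List (SSym α)) (u v : SSym α) : Prop :=
  ∃ p q : List (SSym α), τ = p ++ u :: v :: q

/-- The adjacency `⟨u, v⟩` of `π` is negative: `τ` contains its reversed and
negated form. -/
def NegIn (τ : List (SSym α)) (u v : SSym α) : Prop := PosIn τ (symNeg v) (symNeg u)

/-- Positive and not entangled. -/
def StrictPos (τ : List (SSym α)) (u v : SSym α) : Prop := PosIn τ u v ∧ ¬ NegIn τ u v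

/-- Negative and not entangled. -/
def StrictNeg (τ : List (SSym α)) (u v : SSym α) : Prop := NegIn τ u v ∧ ¬ PosIn τ u v

/-- An entangled adjacency can be read both positively and negatively. -/
def EntangledAdj (τ : List (SSym α)) (u v : SSym α) : Prop := PosIn τ u v ∧ NegIn τ u v

/-- The occurrence `x` (with left neighbor `w` and right neighbor `v`) is a
boundary: its left and right adjacencies have distinct directions. -/
def IsBoundary (τ : List (SSym α)) (w x v : SSym α) : Prop :=
  (StrictPos τ w x ∧ StrictNeg τ x v) ∨ (StrictNeg τ w x ∧ StrictPos τ x v)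

/-- The list of consecutive pairs (adjacencies) of a chromosome. -/
def pairsOf (π : List (SSym α)) : List (SSym α × SSym α) := π.zip π.tail

/-- A direction assignment (`true` = positive) compatible with the bijection
between the adjacencies of `π` and `τ`. -/
def DirOK (τ π : List (SSym α)) (d : List Bool) : Prop :=
  List.Forall₂ (fun (pr : SSym α × SSym α) (b : Bool) =>
    (b = true → PosIn τ pr.1 pr.2) ∧ (b = false → NegIn τ pr.1 pr.2)) (pairsOf π) d

/-- Number of maximal `false`-runs (maximal negative segments). -/
def nMNSAux : Bool → List Bool → ℕ
  | _, [] => 0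
  | prev, b :: rest => (if prev = true ∧ b = false then 1 else 0) + nMNSAux b rest

def nMNS (d : List Bool) : ℕ := nMNSAux true d

/-- `N_MNS[π]`: the number of maximal negative segments of `π` relative to `τ`
(entangled adjacencies assigned so that the number of MNS is minimized,
i.e. taking the common direction of their neighbors). -/
noncomputable def NMNS (π τ : List (SSym α)) : ℕ :=
  sInf { n | ∃ d : List Bool, DirOK τ π d ∧ n = nMNS d }

/-- A node position of the alternative-cycle graph: `(i, false)` is the left
node of the `i`-th occurrence of `π`, `(i, true)` its right node. -/
abbrev NodePos := ℕ × Bool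

/-- The value (as a node of the form `aʰ`/`aᵗ`) sitting at a node position. -/
def nodeVal (π : List (SSym α)) (p : NodePos) : Option (SSym α) :=
  (π[p.1]?).map fun x => if p.2 then rnode x else lnode x

/-- The adjacency of `π` between positions `i` and `i+1`, if any. -/
def adjAt (π : List (SSym α)) (i : ℕ) : Option (Multiset (SSym α)) :=
  match π[i]?, π[i+1]? with
  | some u, some v => some (adjOf u v)
  | _, _ => none

/-- `f` is a bijection matching each adjacency of `τ` with an identical
adjacency of `π`. -/
def AdjBijection (π τ : List (SSym α)) (f : ℕ → ℕ) : Prop :=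
  Set.BijOn f (Set.Iio (τ.length - 1)) (Set.Iio (π.length - 1)) ∧
  ∀ k < τ.length - 1, adjAt τ k = adjAt π (f k)

/-- The blue edge of `ACG(π, τ, f)` corresponding to the `k`-th occurrence of
`τ`: it joins the node of the `f`-image of the adjacency on the left of `y_k`
carrying the value `l(y_k)` with the node of the `f`-image of the adjacency on
the right of `y_k` carrying the value `r(y_k)`. -/
def IsBlueEdge (π τ : List (SSym α)) (f : ℕ → ℕ) (k : ℕ) (e₁ e₂ : NodePos) : Prop :=
  ∃ y : SSym α, τ[k]? = some y ∧
    (if k = 0 then e₁ = (0, false)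
     else (e₁ = (f (k-1), true) ∨ e₁ = (f (k-1) + 1, false)) ∧
       nodeVal π e₁ = some (lnode y)) ∧
    (if k = τ.length - 1 then e₂ = (π.length - 1, true)
     else (e₂ = (f k, true) ∨ e₂ = (f k + 1, false)) ∧
       nodeVal π e₂ = some (rnode y))

/-- A green edge joins `r(x_i)` and `l(x_{i+1})` (an adjacency of `π`). -/
def GreenEdge (p q : NodePos) : Prop :=
  (p.2 = true ∧ q = (p.1 + 1, false)) ∨ (q.2 = true ∧ p = (q.1 + 1, false))

/-- A step along a blue or a green edge. -/
def BGStep (π τ : List (SSym α)) (f : ℕ → ℕ) (p q : NodePos) : Prop :=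
  GreenEdge p q ∨ ∃ k, IsBlueEdge π τ f k p q ∨ IsBlueEdge π τ f k q p


/-! Because the adjacency `⟨x, x'⟩` occurs twice while `|x|` and `|x'|` occur at most twice, every
occurrence of `|x|` or `|x'|` lies in a block `x x'` or `-x' -x`. Hence `π` is recovered from
`delSym x'.1 π` by re-attaching `x'` to `x` (`glue`), and the same holds for every chromosome
reachable from `π`, since symmetric reversals preserve adjacencies and duplication numbers.
Re-attaching `x'` turns reversals into reversals. Conversely, on a glued chromosome, deleting `|x'|`
turns a reversal flanked by `±x'` into the reversal flanked by the adjacent `±x`, and any other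
reversal into the reversal with the same flanks. -/

@[simp] lemma symNeg_symNeg (e : SSym α) : symNeg (symNeg e) = e := by
  simp [symNeg]

@[simp] lemma symNeg_fst (e : SSym α) : (symNeg e).1 = e.1 := rfl

lemma symNeg_ne (e : SSym α) : symNeg e ≠ e := by
  simp [symNeg, Prod.ext_iff]

lemma symNeg_injective : Function.Injective (symNeg : SSym α → SSym α) :=
  Function.Involutive.injective symNeg_symNeg

lemma eq_or_eq_symNeg_of_fst_eq {y z : SSym α} (h : y.1 = z.1) : y = z ∨ y = symNeg z := by
  obtain ⟨c, s⟩ := y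
  obtain ⟨d, t⟩ := z
  cases s <;> cases t <;> simp_all [symNeg]

@[simp] lemma revneg_nil : revneg ([] : List (SSym α)) = [] := rfl

@[simp] lemma revneg_append (s t : List (SSym α)) : revneg (s ++ t) = revneg t ++ revneg s := by
  simp [revneg]

@[simp] lemma revneg_cons (c : SSym α) (s : List (SSym α)) :
    revneg (c :: s) = revneg s ++ [symNeg c] := by
  simp [revneg]

@[simp] lemma revneg_revneg (s : List (SSym α)) : revneg (revneg s) = s := by
  simp [revneg, List.map_reverse, Function.comp_def]

lemma mem_revneg {e : SSym α} {s : List (SSym α)} : e ∈ revneg s ↔ symNeg e ∈ s := by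
  constructor
  · intro h
    obtain ⟨f, hf, rfl⟩ := List.mem_map.1 (List.mem_reverse.1 h)
    simpa using hf
  · intro h
    exact List.mem_reverse.2 (List.mem_map.2 ⟨symNeg e, h, symNeg_symNeg e⟩)

lemma symRev_block {B : List (SSym α)} (hB : B ≠ []) (P M Q : List (SSym α)) :
    SymRev (P ++ B ++ M ++ revneg B ++ Q) (P ++ B ++ revneg M ++ revneg B ++ Q) := by
  obtain ⟨z, B, rfl⟩ := List.exists_cons_of_ne_nil hB
  exact ⟨P, B ++ M ++ revneg B, Q, z, by simp, by simp⟩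

lemma Multiset.pair_eq_pair_iff {β : Type*} {a b c d : β} :
    ({a, b} : Multiset β) = {c, d} ↔ a = c ∧ b = d ∨ a = d ∧ b = c := by
  constructor
  · intro h
    rw [Multiset.insert_eq_cons, Multiset.insert_eq_cons] at h
    rcases Multiset.cons_eq_cons.1 h with ⟨h₁, h₂⟩ | ⟨-, s, h₂, h₃⟩
    · exact Or.inl ⟨h₁, Multiset.singleton_inj.1 h₂⟩
    · rw [Multiset.singleton_eq_cons_iff] at h₂ h₃
      exact Or.inr ⟨h₃.1.symm, h₂.1⟩
  · rintro (⟨rfl, rfl⟩ | ⟨rfl, rfl⟩)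
    · rfl
    · exact Multiset.pair_comm _ _

lemma adjOf_eq_adjOf_iff {c d u v : SSym α} :
    adjOf c d = adjOf u v ↔ c = u ∧ d = v ∨ c = symNeg v ∧ d = symNeg u := by
  have hc : ∀ e f : SSym α, symNeg e = f ↔ e = symNeg f := fun e f =>
    ⟨fun h => by rw [← h, symNeg_symNeg], fun h => by rw [h, symNeg_symNeg]⟩
  simp only [adjOf, rnode, lnode, Multiset.pair_eq_pair_iff]
  simp only [show ∀ e : SSym α, (e.1, !e.2) = symNeg e from fun _ => rfl, hc, symNeg_symNeg]

lemma adjOf_symNeg (u v : SSym α) : adjOf (symNeg v) (symNeg u) = adjOf u v :=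
  adjOf_eq_adjOf_iff.2 (Or.inr ⟨rfl, rfl⟩)

lemma adjMS_append_cons (l : List (SSym α)) (u : SSym α) (r : List (SSym α)) :
    adjMS (l ++ u :: r) = adjMS (l ++ [u]) + adjMS (u :: r) := by
  induction l with
  | nil => simp [adjMS]
  | cons c l ih =>
    cases l with
    | nil => simp [adjMS]
    | cons d l =>
      simp only [List.cons_append, adjMS] at ih ⊢
      rw [ih, Multiset.cons_add]

@[simp] lemma adjMS_revneg (l : List (SSym α)) : adjMS (revneg l) = adjMS l := by
  induction l with
  | nil => rfl
  | cons c l ih =>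
    cases l with
    | nil => rfl
    | cons d l =>
      rw [revneg_cons, revneg_cons, List.append_assoc, List.singleton_append,
        adjMS_append_cons, ← revneg_cons, ih]
      simp only [adjMS, adjOf_symNeg]
      rw [add_comm, Multiset.cons_add, zero_add]

lemma SymRev.adjMS_eq {σ σ' : List (SSym α)} (h : SymRev σ σ') : adjMS σ' = adjMS σ := by
  obtain ⟨p, m, q, y, rfl, rfl⟩ := h
  have split : ∀ m', adjMS (p ++ y :: m' ++ symNeg y :: q) =
      adjMS (p ++ [y]) + adjMS (y :: m' ++ [symNeg y]) + adjMS (symNeg y :: q) := by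
    intro m'
    rw [List.append_assoc, List.cons_append, adjMS_append_cons p y, ← List.cons_append,
      adjMS_append_cons (y :: m') (symNeg y) q, add_assoc]
  rw [split, split, ← adjMS_revneg (y :: m ++ [symNeg y])]
  simp

section DecidableEq

variable [DecidableEq α]

lemma dpCount_cons (b : α) (c : SSym α) (l : List (SSym α)) :
    dpCount b (c :: l) = dpCount b l + if c.1 = b then 1 else 0 := by
  simp [dpCount, List.count_cons]

lemma SymRev.dpCount_eq {σ σ' : List (SSym α)} (h : SymRev σ σ') (b : α) :
    dpCount b σ' = dpCount b σ := by
  obtain ⟨p, m, q, y, rfl, rfl⟩ := h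
  have hfst : (Prod.fst ∘ symNeg : SSym α → α) = Prod.fst := rfl
  simp [dpCount, revneg, List.map_reverse, List.count_cons, hfst]

lemma count_adjMS_cons_of_ne {u v : SSym α} (huv : u ≠ v) (t : List (SSym α)) :
    (adjMS (v :: t)).count (adjOf u v) = (adjMS t).count (adjOf u v) := by
  cases t with
  | nil => rfl
  | cons w t =>
    rw [adjMS, Multiset.count_cons_of_ne]
    rw [Ne, adjOf_eq_adjOf_iff]
    rintro (⟨h, -⟩ | ⟨-, h⟩)
    · exact huv h
    · exact symNeg_ne v h.symm

lemma count_adjMS_le_dpCount {u v : SSym α} (huv : u ≠ v) :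
    ∀ σ : List (SSym α), (adjMS σ).count (adjOf u v) ≤ dpCount v.1 σ
  | [] => by simp [adjMS]
  | [c] => by simp [adjMS]
  | c :: d :: t => by
    have ih₁ := count_adjMS_le_dpCount huv t
    have ih₂ := count_adjMS_le_dpCount huv (d :: t)
    rw [adjMS, Multiset.count_cons, dpCount_cons]
    by_cases hcd : adjOf u v = adjOf c d
    · rw [if_pos hcd]
      rcases adjOf_eq_adjOf_iff.1 hcd.symm with ⟨rfl, rfl⟩ | ⟨rfl, rfl⟩
      · rw [count_adjMS_cons_of_ne huv, dpCount_cons, if_pos rfl]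
        split <;> omega
      · rw [symNeg_fst, if_pos rfl]
        omega
    · rw [if_neg hcd]
      split <;> omega

lemma delSym_cons_of_ne {b : α} {c : SSym α} (h : c.1 ≠ b) (l : List (SSym α)) :
    delSym b (c :: l) = c :: delSym b l := by
  simp [delSym, h]

lemma delSym_cons_of_eq {b : α} {c : SSym α} (h : c.1 = b) (l : List (SSym α)) :
    delSym b (c :: l) = delSym b l := by
  simp [delSym, h]

@[simp] lemma delSym_append (b : α) (l₁ l₂ : List (SSym α)) :
    delSym b (l₁ ++ l₂) = delSym b l₁ ++ delSym b l₂ := by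
  simp [delSym]

@[simp] lemma delSym_revneg (b : α) (l : List (SSym α)) :
    delSym b (revneg l) = revneg (delSym b l) := by
  simp only [delSym, revneg, List.filter_reverse, List.filter_map]
  rfl

lemma fst_ne_of_mem_delSym {b : α} {σ : List (SSym α)} {e : SSym α} (he : e ∈ delSym b σ) :
    e.1 ≠ b := by
  simpa [delSym] using (List.mem_filter.1 he).2

lemma symRev_delSym_block {b : α} {B : List (SSym α)} (hB : delSym b B ≠ [])
    (P M Q : List (SSym α)) :
    SymRev (delSym b (P ++ B ++ M ++ revneg B ++ Q))
      (delSym b (P ++ B ++ revneg M ++ revneg B ++ Q)) := by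
  simpa using symRev_block hB (delSym b P) (delSym b M) (delSym b Q)

/-- Each occurrence of `adjOf x x'` uses one occurrence of `|x|` and one of `|x'|`
(`count_adjMS_le_dpCount`), so these equalities say that every occurrence of `|x|` or `|x'|`
lies in an occurrence of this adjacency. -/
def Redundant (x x' : SSym α) (σ : List (SSym α)) : Prop :=
  dpCount x.1 σ = (adjMS σ).count (adjOf x x') ∧ dpCount x'.1 σ = (adjMS σ).count (adjOf x x')

def glueBlock (x x' e : SSym α) : List (SSym α) :=
  if e = x then [x, x'] else if e = symNeg x then [symNeg x', symNeg x] else [e]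

def glue (x x' : SSym α) (w : List (SSym α)) : List (SSym α) := w.flatMap (glueBlock x x')

section Redundant

variable {x x' : SSym α}

lemma count_adjMS_le_dpCount_fst (hx : x ≠ x') (σ : List (SSym α)) :
    (adjMS σ).count (adjOf x x') ≤ dpCount x.1 σ := by
  simpa [adjOf_symNeg] using
    count_adjMS_le_dpCount (u := symNeg x') (v := symNeg x) (symNeg_injective.ne hx.symm) σ

lemma Redundant.of_count_eq_two (hx : x ≠ x') {σ : List (SSym α)} (hdp : ∀ c, dpCount c σ ≤ 2)
    (h : (adjMS σ).count (adjOf x x') = 2) : Redundant x x' σ :=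
  ⟨le_antisymm (h ▸ hdp _) (count_adjMS_le_dpCount_fst hx σ),
    le_antisymm (h ▸ hdp _) (count_adjMS_le_dpCount hx σ)⟩

lemma SymRev.redundant {σ σ' : List (SSym α)} (h : SymRev σ σ') (hσ : Redundant x x' σ) :
    Redundant x x' σ' := by
  rwa [Redundant, h.adjMS_eq, h.dpCount_eq, h.dpCount_eq]

lemma Redundant.of_cons_cons (hx : x.1 ≠ x'.1) {u v : SSym α} {t : List (SSym α)}
    (huv : u = x ∧ v = x' ∨ u = symNeg x' ∧ v = symNeg x) (h : Redundant x x' (u :: v :: t)) :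
    Redundant x x' t := by
  have hne : u ≠ v := by
    rcases huv with ⟨rfl, rfl⟩ | ⟨rfl, rfl⟩
    · exact ne_of_apply_ne Prod.fst hx
    · exact ne_of_apply_ne Prod.fst hx.symm
  have hcount : (adjMS (u :: v :: t)).count (adjOf x x') = (adjMS t).count (adjOf x x') + 1 := by
    rw [← adjOf_eq_adjOf_iff.2 huv, adjMS, Multiset.count_cons_self,
      count_adjMS_cons_of_ne hne]
  obtain ⟨ha, hb⟩ := h
  rw [hcount, dpCount_cons, dpCount_cons] at ha hb
  rcases huv with ⟨rfl, rfl⟩ | ⟨rfl, rfl⟩ <;>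
    simp only [symNeg_fst, if_true, hx, Ne.symm hx, if_false] at ha hb <;>
    exact ⟨by omega, by omega⟩

lemma Redundant.of_cons (hx : x ≠ x') {c : SSym α} {σ : List (SSym α)}
    (h : Redundant x x' (c :: σ))
    (hc : (adjMS (c :: σ)).count (adjOf x x') = (adjMS σ).count (adjOf x x')) :
    c.1 ≠ x.1 ∧ c.1 ≠ x'.1 ∧ Redundant x x' σ := by
  have la := count_adjMS_le_dpCount_fst hx σ
  have lb := count_adjMS_le_dpCount hx σ
  obtain ⟨ha, hb⟩ := h
  rw [hc, dpCount_cons] at ha hb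
  split_ifs at ha hb with hca hcb hcb
  all_goals first
    | omega
    | exact ⟨hca, hcb, by omega, by omega⟩

@[simp] lemma glue_nil : glue x x' [] = [] := rfl

@[simp] lemma glue_cons (e : SSym α) (w : List (SSym α)) :
    glue x x' (e :: w) = glueBlock x x' e ++ glue x x' w := rfl

@[simp] lemma glue_append (w₁ w₂ : List (SSym α)) :
    glue x x' (w₁ ++ w₂) = glue x x' w₁ ++ glue x x' w₂ := by
  simp [glue]

@[simp] lemma glueBlock_self : glueBlock x x' x = [x, x'] := if_pos rfl

@[simp] lemma glueBlock_symNeg_self : glueBlock x x' (symNeg x) = [symNeg x', symNeg x] := by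
  rw [glueBlock, if_neg (symNeg_ne x), if_pos rfl]

lemma glueBlock_of_fst_ne {e : SSym α} (h : e.1 ≠ x.1) : glueBlock x x' e = [e] := by
  rw [glueBlock, if_neg (by rintro rfl; exact h rfl), if_neg (by rintro rfl; exact h rfl)]

lemma glueBlock_ne_nil (e : SSym α) : glueBlock x x' e ≠ [] := by
  unfold glueBlock
  split_ifs <;> simp

lemma glueBlock_symNeg (e : SSym α) : glueBlock x x' (symNeg e) = revneg (glueBlock x x' e) := by
  by_cases he : e.1 = x.1
  · rcases eq_or_eq_symNeg_of_fst_eq he with rfl | rfl <;> simp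
  · rw [glueBlock_of_fst_ne he, glueBlock_of_fst_ne (by simpa using he)]
    simp

lemma glue_revneg (w : List (SSym α)) : glue x x' (revneg w) = revneg (glue x x' w) := by
  induction w with
  | nil => rfl
  | cons e w ih => simp [ih, glueBlock_symNeg]

lemma symRev_glue {w w' : List (SSym α)} (h : SymRev w w') :
    SymRev (glue x x' w) (glue x x' w') := by
  obtain ⟨p, m, q, y, rfl, rfl⟩ := h
  simpa [glueBlock_symNeg, glue_revneg] using
    symRev_block (glueBlock_ne_nil (x := x) (x' := x') y) (glue x x' p) (glue x x' m) (glue x x' q)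

lemma transformable_glue {w w' : List (SSym α)} (h : Transformable w w') :
    Transformable (glue x x' w) (glue x x' w') :=
  Relation.ReflTransGen.lift (glue x x') (fun _ _ => symRev_glue) _ _ h

lemma glue_delSym_of_redundant (hx : x.1 ≠ x'.1) :
    ∀ σ : List (SSym α), Redundant x x' σ → glue x x' (delSym x'.1 σ) = σ
  | [], _ => rfl
  | [c], h => by
    obtain ⟨hca, hcb, -⟩ := h.of_cons (ne_of_apply_ne Prod.fst hx) rfl
    rw [delSym_cons_of_ne hcb]
    simp [delSym, glueBlock_of_fst_ne hca]
  | c :: d :: t, h => by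
    by_cases hcd : adjOf c d = adjOf x x'
    · have huv := adjOf_eq_adjOf_iff.1 hcd
      have ih := glue_delSym_of_redundant hx t (h.of_cons_cons hx huv)
      rcases huv with ⟨rfl, rfl⟩ | ⟨rfl, rfl⟩
      · rw [delSym_cons_of_ne hx, delSym_cons_of_eq rfl, glue_cons, ih, glueBlock_self]
        rfl
      · rw [delSym_cons_of_eq (symNeg_fst _), delSym_cons_of_ne (by simpa using hx), glue_cons,
          ih, glueBlock_symNeg_self]
        rfl
    · obtain ⟨hca, hcb, hσ⟩ := h.of_cons (ne_of_apply_ne Prod.fst hx)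
        (by rw [adjMS, Multiset.count_cons_of_ne (Ne.symm hcd)])
      rw [delSym_cons_of_ne hcb, glue_cons, glueBlock_of_fst_ne hca,
        glue_delSym_of_redundant hx (d :: t) hσ]
      rfl

lemma exists_eq_concat_of_glue_eq (hx : x.1 ≠ x'.1) {w p r : List (SSym α)}
    (hw : ∀ e ∈ w, e.1 ≠ x'.1) (h : glue x x' w = p ++ x' :: r) : ∃ p₀, p = p₀ ++ [x] := by
  induction w generalizing p with
  | nil => simp at h
  | cons e w ih =>
    have ih' : ∀ p, glue x x' w = p ++ x' :: r → ∃ p₀, p = p₀ ++ [x] :=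
      fun _ => ih (fun f hf => hw f (List.mem_cons_of_mem e hf))
    rw [glue_cons, List.append_eq_append_iff] at h
    rcases h with ⟨s, rfl, hs⟩ | ⟨_ | ⟨z, s⟩, hblock, hs⟩
    · obtain ⟨p₀, rfl⟩ := ih' _ hs
      exact ⟨glueBlock x x' e ++ p₀, by simp⟩
    · obtain ⟨p₀, hp₀⟩ := ih' [] (by simpa using hs.symm)
      simp at hp₀
    · obtain ⟨rfl, -⟩ := List.cons_eq_cons.1 hs
      by_cases he : e.1 = x.1
      · rcases eq_or_eq_symNeg_of_fst_eq he with rfl | rfl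
        · rw [glueBlock_self] at hblock
          rcases p with _ | ⟨c, _ | ⟨d, p⟩⟩
          · exact absurd (congrArg Prod.fst (List.cons_eq_cons.1 hblock).1) hx
          · exact ⟨[], by simp [(List.cons_eq_cons.1 hblock).1]⟩
          · simp at hblock
        · rw [glueBlock_symNeg_self] at hblock
          have hmem : x' ∈ [symNeg x', symNeg x] := hblock ▸ by simp
          simp only [List.mem_cons, List.not_mem_nil, or_false] at hmem
          rcases hmem with h | h
          · exact absurd h.symm (symNeg_ne x')
          · exact absurd (congrArg Prod.fst h) hx.symm
      · have hmem : x' ∈ glueBlock x x' e := hblock ▸ by simp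
        rw [glueBlock_of_fst_ne he, List.mem_singleton] at hmem
        exact absurd (congrArg Prod.fst hmem) (hw e List.mem_cons_self).symm

lemma exists_eq_cons_of_glue_eq (hx : x.1 ≠ x'.1) {w p r : List (SSym α)}
    (hw : ∀ e ∈ w, e.1 ≠ x'.1) (h : glue x x' w = p ++ symNeg x' :: r) :
    ∃ r₀, r = symNeg x :: r₀ := by
  have hw' : ∀ e ∈ revneg w, e.1 ≠ x'.1 := fun e he => by
    simpa using hw _ (mem_revneg.1 he)
  obtain ⟨r₀, hr₀⟩ := exists_eq_concat_of_glue_eq hx hw' (p := revneg r) (r := revneg p)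
    (by rw [glue_revneg, h]; simp)
  exact ⟨revneg r₀, by simpa using congrArg revneg hr₀⟩

lemma exists_flanks_of_glue_eq (hx : x.1 ≠ x'.1) {w p m q : List (SSym α)}
    (hw : ∀ e ∈ w, e.1 ≠ x'.1) (h : glue x x' w = p ++ x' :: m ++ symNeg x' :: q) :
    ∃ p₀ q₀, p = p₀ ++ [x] ∧ q = symNeg x :: q₀ := by
  obtain ⟨p₀, hp⟩ := exists_eq_concat_of_glue_eq hx hw (p := p) (r := m ++ symNeg x' :: q)
    (h.trans (by simp))
  obtain ⟨q₀, hq⟩ := exists_eq_cons_of_glue_eq hx hw h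
  exact ⟨p₀, q₀, hp, hq⟩

lemma exists_inner_flanks_of_glue_eq (hx : x.1 ≠ x'.1) {w p m q : List (SSym α)}
    (hw : ∀ e ∈ w, e.1 ≠ x'.1) (h : glue x x' w = p ++ symNeg x' :: m ++ x' :: q) :
    ∃ m₀, m = symNeg x :: (m₀ ++ [x]) := by
  obtain ⟨r, hr⟩ := exists_eq_cons_of_glue_eq hx hw (p := p) (r := m ++ x' :: q)
    (h.trans (by simp))
  obtain ⟨p₀, hp₀⟩ := exists_eq_concat_of_glue_eq hx hw h
  rcases m with _ | ⟨c, m⟩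
  · obtain ⟨h, -⟩ := List.cons_eq_cons.1 hr
    exact absurd (congrArg Prod.fst h) hx.symm
  obtain ⟨rfl, -⟩ := List.cons_eq_cons.1 hr
  rcases List.eq_nil_or_concat m with rfl | ⟨m₀, z, rfl⟩
  · exact absurd (by simpa [List.getLast?_cons] using congrArg List.getLast? hp₀) (symNeg_ne x)
  · obtain rfl : z = x := by simpa [List.getLast?_cons] using congrArg List.getLast? hp₀
    exact ⟨m₀, by simp⟩

lemma SymRev.delSym_of_glue (hx : x.1 ≠ x'.1) {σ σ' : List (SSym α)}
    (hσ : glue x x' (delSym x'.1 σ) = σ) (h : SymRev σ σ') :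
    SymRev (delSym x'.1 σ) (delSym x'.1 σ') := by
  have hw : ∀ e ∈ delSym x'.1 σ, e.1 ≠ x'.1 := fun _ => fst_ne_of_mem_delSym
  obtain ⟨p, m, q, y, rfl, rfl⟩ := h
  by_cases hy : y.1 = x'.1
  · rcases eq_or_eq_symNeg_of_fst_eq hy with rfl | rfl
    · obtain ⟨p₀, q₀, rfl, rfl⟩ := exists_flanks_of_glue_eq hx hw hσ
      simpa using symRev_delSym_block (B := [x, y]) (by simp [delSym, hx]) p₀ m q₀
    · obtain ⟨m₀, rfl⟩ := exists_inner_flanks_of_glue_eq hx hw (p := p) (m := m) (q := q)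
        (hσ.trans (by simp))
      simpa using symRev_delSym_block (B := [symNeg x', symNeg x]) (by simp [delSym, hx]) p m₀ q
  · simpa using symRev_delSym_block (B := [y]) (by simp [delSym, hy]) p m q

lemma Transformable.delSym (hx : x.1 ≠ x'.1) {σ τ : List (SSym α)}
    (h : Transformable σ τ) (hσ : Redundant x x' σ) :
    Transformable (delSym x'.1 σ) (delSym x'.1 τ) := by
  induction h using Relation.ReflTransGen.head_induction_on with
  | refl => exact .refl
  | head hstep _ ih =>
    exact .head (hstep.delSym_of_glue hx (glue_delSym_of_redundant hx _ hσ))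
      (ih (hstep.redundant hσ))

end Redundant

end DecidableEq

theorem transformable_iff_delete_redundant_general [DecidableEq α]
    (π τ : List (SSym α))
    (hA : adjMS π = adjMS τ)
    (hdpπ : ∀ c, dpCount c π ≤ 2) (hdpτ : ∀ c, dpCount c τ ≤ 2)
    (a b : α) (hab : a ≠ b)
    (x x' : SSym α)
    (hxa : x.1 = a) (hx'b : x'.1 = b)
    (hred : (adjMS π).count (adjOf x x') = 2) :
    (Transformable π τ ↔ Transformable (delSym b π) (delSym b τ)) := by
  subst hxa hx'b
  have hxx' : x ≠ x' := ne_of_apply_ne Prod.fst hab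
  have hredπ : Redundant x x' π := .of_count_eq_two hxx' hdpπ hred
  have hredτ : Redundant x x' τ := .of_count_eq_two hxx' hdpτ (hA ▸ hred)
  refine ⟨fun h => h.delSym hab hredπ, fun h => ?_⟩
  rw [← glue_delSym_of_redundant hab π hredπ, ← glue_delSym_of_redundant hab τ hredτ]
  exact transformable_glue h

/-- deleting a redundant repeat preserves sortability. -/
theorem transformable_iff_delete_redundant [DecidableEq α] (r₀ : α)
    (π τ : List (SSym α)) (hπ : IsChromosome r₀ π) (hτ : IsChromosome r₀ τ)
    (hA : adjMS π = adjMS τ)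
    (hdpπ : ∀ c, dpCount c π ≤ 2) (hdpτ : ∀ c, dpCount c τ ≤ 2)
    (a b : α) (hab : a ≠ b) (hbr : b ≠ r₀)
    (p q : List (SSym α)) (x x' : SSym α)
    (hdec : π = p ++ x :: x' :: q) (hxa : x.1 = a) (hx'b : x'.1 = b)
    (hred : (adjMS π).count (adjOf x x') = 2) :
    (Transformable π τ ↔ Transformable (delSym b π) (delSym b τ)) :=
  transformable_iff_delete_redundant_general π τ hA hdpπ hdpτ a b hab x x' hxa hx'b hred
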